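/- Let u : M → [0,1) be a proper continuous function on a connected manifold M with connected compact boundary ∂M = u⁻¹(0), and suppose u satisfies the strong maximum principle (u attains no interior local minimum and no interior local maximum on any compact subdomain unless constant). Then for every τ ∈ (0,1), the open sub-level set {u < τ} is connected, and every connected component of {u < τ} has nonempty intersection with ∂M. -/

import Mathlib

open Set

/-
A component `C` of `{u < τ}` has closure inside the compact set `{u ≤ τ}`, so `u` attains its
minimum over `closure C` at some `y`. Then `u y < τ`, so `y` lies in `C` itself, which is open by
local connectedness; hence `y` is a local minimum of `u`. The maximum principle forces `y` onto
the boundary `u⁻¹(0)`. Every component therefore meets the connected boundary, and their union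
with it is connected.
-/

section Sublevel

variable {X : Type*} [TopologicalSpace X]

theorem mem_connectedComponentIn_of_mem_closure {S : Set X} {x y : X}
    (hx : x ∈ S) (hyS : y ∈ S) (hy : y ∈ closure (connectedComponentIn S x)) :
    y ∈ connectedComponentIn S x := by
  have hpre : IsPreconnected (connectedComponentIn S x ∪ {y}) :=
    isPreconnected_connectedComponentIn.subset_closure subset_union_left
      (union_subset subset_closure (singleton_subset_iff.2 hy))
  exact hpre.subset_connectedComponentIn (Or.inl (mem_connectedComponentIn hx))
    (union_subset (connectedComponentIn_subset S x) (singleton_subset_iff.2 hyS))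
    (Or.inr rfl)

theorem exists_isLocalMin_mem_connectedComponentIn_sublevel [LocallyConnectedSpace X]
    {f : X → ℝ} (hf : Continuous f) {τ : ℝ} (hτ : IsCompact {z | f z ≤ τ})
    {x : X} (hx : f x < τ) :
    ∃ y ∈ connectedComponentIn {z | f z < τ} x, IsLocalMin f y := by
  set C := connectedComponentIn {z | f z < τ} x
  have hxC : x ∈ C := mem_connectedComponentIn hx
  have hCopen : IsOpen C := (isOpen_lt hf continuous_const).connectedComponentIn
  have hclosure : closure C ⊆ {z | f z ≤ τ} :=
    closure_minimal (fun z hz => show f z ≤ τ from (connectedComponentIn_subset _ x hz).le)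
      (isClosed_le hf continuous_const)
  obtain ⟨y, hy, hymin⟩ := (hτ.of_isClosed_subset isClosed_closure hclosure).exists_isMinOn
    ⟨x, subset_closure hxC⟩ hf.continuousOn
  have hyC : y ∈ C := mem_connectedComponentIn_of_mem_closure hx
    ((hymin (subset_closure hxC)).trans_lt hx) hy
  exact ⟨y, hyC, hymin.isLocalMin (Filter.mem_of_superset (hCopen.mem_nhds hyC) subset_closure)⟩

theorem connectedComponentIn_sublevel_inter_nonempty [LocallyConnectedSpace X]
    {f : X → ℝ} (hf : Continuous f) {B : Set X} (hB : ∀ y ∉ B, ¬ IsLocalMin f y)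
    {τ : ℝ} (hτ : IsCompact {z | f z ≤ τ}) {x : X} (hx : f x < τ) :
    (connectedComponentIn {z | f z < τ} x ∩ B).Nonempty := by
  obtain ⟨y, hyC, hymin⟩ := exists_isLocalMin_mem_connectedComponentIn_sublevel hf hτ hx
  by_contra hempty
  exact hB y (fun hyB => hempty ⟨y, hyC, hyB⟩) hymin

theorem isPreconnected_of_forall_connectedComponentIn_inter_nonempty {S B : Set X} (hB : IsConnected B) (hBS : B ⊆ S)
    (h : ∀ x ∈ S, (connectedComponentIn S x ∩ B).Nonempty) : IsPreconnected S := by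
  obtain ⟨b, hb⟩ := hB.nonempty
  refine isPreconnected_of_forall b fun x hx => ⟨connectedComponentIn S x ∪ B,
    union_subset (connectedComponentIn_subset S x) hBS, Or.inr hb,
    Or.inl (mem_connectedComponentIn hx), ?_⟩
  exact ((isConnected_connectedComponentIn_iff.2 hx).union (h x hx) hB).isPreconnected

end Sublevel

theorem sublevel_connected_general {M : Type*} [TopologicalSpace M]
    [LocallyConnectedSpace M]
    (u : M → ℝ) (hu : Continuous u)
    (hproper : ∀ τ < (1 : ℝ), IsCompact {x | u x ≤ τ})
    (hbdry : IsConnected (u ⁻¹' {0}))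
    (hmp : ∀ x, u x ≠ 0 → ¬ IsLocalMin u x ∧ ¬ IsLocalMax u x) :
    ∀ τ ∈ Ioo (0 : ℝ) 1,
      IsConnected {x | u x < τ} ∧
      ∀ x, u x < τ →
        (connectedComponentIn {x | u x < τ} x ∩ u ⁻¹' {0}).Nonempty := by
  rintro τ ⟨hτ0, hτ1⟩
  have hmeets : ∀ x, u x < τ → (connectedComponentIn {x | u x < τ} x ∩ u ⁻¹' {0}).Nonempty :=
    fun x hx => connectedComponentIn_sublevel_inter_nonempty hu (fun y hy => (hmp y hy).1)
      (hproper τ hτ1) hx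
  have hbdry_sub : u ⁻¹' {0} ⊆ {x | u x < τ} := fun x (hx : u x = 0) =>
    show u x < τ from hx ▸ hτ0
  exact ⟨⟨hbdry.nonempty.mono hbdry_sub,
    isPreconnected_of_forall_connectedComponentIn_inter_nonempty hbdry hbdry_sub hmeets⟩, hmeets⟩

/-- Topological lemma (Subsection 1.3): let `u : M → [0,1)` be a proper continuous
function on a connected manifold `M` whose boundary `∂M = u⁻¹(0)` is compact,
connected and nonempty, and suppose `u` satisfies the strong maximum principle in
the form that `u` has no local minimum and no local maximum at any point off the
boundary. Then for every `τ ∈ (0,1)` the open sub-level set `{u < τ}` is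
connected, and every connected component of `{u < τ}` meets `∂M`. -/
theorem sublevel_connected {M : Type*} [TopologicalSpace M] [T2Space M]
    [LocallyConnectedSpace M] [ConnectedSpace M]
    (u : M → ℝ) (hu : Continuous u) (hrange : ∀ x, u x ∈ Ico (0 : ℝ) 1)
    (hproper : ∀ τ < (1 : ℝ), IsCompact {x | u x ≤ τ})
    (hbdry : IsConnected (u ⁻¹' {0})) (hbdry_cpt : IsCompact (u ⁻¹' {0}))
    (hmp : ∀ x, u x ≠ 0 → ¬ IsLocalMin u x ∧ ¬ IsLocalMax u x) :
    ∀ τ ∈ Ioo (0 : ℝ) 1,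
      IsConnected {x | u x < τ} ∧
      ∀ x, u x < τ →
        (connectedComponentIn {x | u x < τ} x ∩ u ⁻¹' {0}).Nonempty :=
  sublevel_connected_general u hu hproper hbdry hmp
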